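/- arXiv:1302.0237 — 2 statements merged into one kernel-verified Lean document; each statement's English description precedes it below -/
import Mathlib

section
/- Let R be a commutative ring, M a finitely generated projective R-module, and let A = R ⊕ M be the trivial square-zero extension. Define the complex P with P_{-k} = Λ^{k+1} M ⊕ Λ^k M, with A-module structure where R acts by multiplication, M acts by zero on Λ^{k+1}M and by wedge product M ⊗ Λ^k M → Λ^{k+1} M on Λ^k M, and differential d_{-k}(a, b) = (b, 0). Then P is an exact resolution of R as an A-module: H₀(P) = R and H_{-k}(P) = 0 for k > 0. -/
/-!
STATEMENT 7: Let `R` be a commutative ring, `M` a finitely generated projective `R`-module,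
`A = R ⊕ M` the trivial square-zero extension. The Atiyah–Kashiwara complex `P` has
`P_{-k} = Λ^{k+1} M ⊕ Λ^k M`, `A`-module structure where `R` acts by multiplication, `M` acts
by zero on `Λ^{k+1} M` and by wedge `M ⊗ Λ^k M → Λ^{k+1} M` on `Λ^k M`, and differential
`d_{-k}(a, b) = (b, 0)`. Then `P` is an exact resolution of `R` as an `A`-module:
`H₀(P) = R` (via the augmentation, `Λ^0 M ≅ R`) and `H_{-k}(P) = 0` for `k > 0`; moreover the
differentials commute with the `M`-action (so are `A`-linear, not merely `R`-linear).
-/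

variable {R M : Type*} [CommRing R] [AddCommGroup M] [Module R M]

/-- Wedge multiplication `M × Λ^k M → Λ^{k+1} M`. -/
noncomputable def wedgeι (k : ℕ) (m : M) (w : ⋀[R]^k M) : ⋀[R]^(k + 1) M :=
  ⟨ExteriorAlgebra.ι R m * (w : ExteriorAlgebra R M), by
    have := Submodule.mul_mem_mul (LinearMap.mem_range_self (ExteriorAlgebra.ι R) m) w.2
    rwa [← pow_succ'] at this⟩

/-- The term of (cohomological) degree `-k` of the Atiyah–Kashiwara complex:
`P_{-k} = Λ^{k+1} M ⊕ Λ^k M`. -/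
abbrev akTerm (R M : Type*) [CommRing R] [AddCommGroup M] [Module R M] (k : ℕ) :=
  (⋀[R]^(k + 1) M) × (⋀[R]^k M)

/-- The differential `d_{-(k+1)} : P_{-(k+1)} → P_{-k}`, `(a, b) ↦ (b, 0)`. -/
noncomputable def akD (k : ℕ) : akTerm R M (k + 1) →ₗ[R] akTerm R M k :=
  (LinearMap.inl R _ _).comp (LinearMap.snd R _ _)

/-- The action of `m : M ⊆ A` on `P_{-k}`: zero on `Λ^{k+1} M`, wedge on `Λ^k M`. -/
noncomputable def akMAct (k : ℕ) (m : M) (x : akTerm R M k) : akTerm R M k :=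
  (wedgeι k m x.2, 0)

/-- The augmentation `P_0 = Λ^1 M ⊕ Λ^0 M → Λ^0 M (≅ R)`. -/
noncomputable def akAug : akTerm R M 0 →ₗ[R] ⋀[R]^0 M :=
  LinearMap.snd R _ _

/-!
The differential `(a, b) ↦ (b, 0)` is the projection onto the second factor followed by the
inclusion of the first factor. Its kernel is `Λ^{k+1} M × 0`, which is exactly the image of the
previous differential, because the projection is surjective and the inclusion injective.
The `M`-action commutes with `d` since both composites vanish: wedging with `0` gives `0`.
-/

open LinearMap Function

section ShiftProjection

variable {S : Type*} [Semiring S] {X Y Z W : Type*} [AddCommMonoid X] [AddCommMonoid Y]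
  [AddCommMonoid Z] [AddCommMonoid W] [Module S X] [Module S Y] [Module S Z] [Module S W]

theorem exact_inl_comp_snd_snd :
    Exact (inl S Y Z ∘ₗ snd S X Y) (snd S Y Z) :=
  (Surjective.comp_exact_iff_exact Prod.snd_surjective).2 Exact.inl_snd

theorem exact_inl_comp_snd_inl_comp_snd :
    Exact (inl S Y Z ∘ₗ snd S X Y) (inl S Z W ∘ₗ snd S Y Z) :=
  (Injective.comp_exact_iff_exact inl_injective).2 exact_inl_comp_snd_snd

end ShiftProjection

@[simp]
theorem wedgeι_zero (k : ℕ) (m : M) : wedgeι k m (0 : ⋀[R]^k M) = 0 :=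
  Subtype.ext (mul_zero _)

theorem akD_akMAct (k : ℕ) (m : M) (x : akTerm R M (k + 1)) :
    akD k (akMAct (k + 1) m x) = akMAct k m (akD k x) :=
  Prod.ext (wedgeι_zero k m).symm rfl

theorem stmt7_general (R M : Type*) [CommRing R] [AddCommGroup M] [Module R M] :
    (∀ k : ℕ, Function.Exact (akD (R := R) (M := M) (k + 1)) (akD k)) ∧
    Function.Exact (akD (R := R) (M := M) 0) akAug ∧
    Function.Surjective (akAug (R := R) (M := M)) ∧
    Nonempty ((⋀[R]^0 M) ≃ₗ[R] R) ∧
    (∀ (k : ℕ) (m : M) (x : akTerm R M (k + 1)),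
      akD k (akMAct (k + 1) m x) = akMAct k m (akD k x)) :=
  ⟨fun _ => exact_inl_comp_snd_inl_comp_snd, exact_inl_comp_snd_snd, Prod.snd_surjective,
    ⟨exteriorPower.zeroEquiv R M⟩, akD_akMAct⟩

theorem stmt7 (R M : Type*) [CommRing R] [AddCommGroup M] [Module R M]
    [Module.Finite R M] [Module.Projective R M] :
    (∀ k : ℕ, Function.Exact (akD (R := R) (M := M) (k + 1)) (akD k)) ∧
    Function.Exact (akD (R := R) (M := M) 0) akAug ∧
    Function.Surjective (akAug (R := R) (M := M)) ∧
    Nonempty ((⋀[R]^0 M) ≃ₗ[R] R) ∧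
    (∀ (k : ℕ) (m : M) (x : akTerm R M (k + 1)),
      akD k (akMAct (k + 1) m x) = akMAct k m (akD k x)) :=
  stmt7_general R M
end

section
/- Let 0 → E → N → Q → 0 be an exact sequence of finite rank vector bundles on a space T, with E of rank r, and suppose there is an isomorphism of bundles φ : E ⊕ E ⊕ Q → E ⊕ N such that the composite E → E ⊕ E ⊕ Q → E ⊕ N (inclusion into the second E factor followed by φ) equals (id_E, α) where α : E → N is the given inclusion, and the composite E → E ⊕ E ⊕ Q → E ⊕ N (inclusion into the first factor followed by φ) equals (id_E, 0). Then the composite E ⊕ Q ↪ E ⊕ E ⊕ Q →^φ E ⊕ N → N (using the second and third summands) is an isomorphism whose restriction to E is α; consequently the sequence 0 → E → N → Q → 0 splits. -/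
/-!
The isomorphism `φ` is block triangular with respect to the first summand `E`, with the
identity as its corner, so its complementary block `E ⊕ Q → N` is an isomorphism; by the second
compatibility it restricts to `α` on `E`. Its inverse followed by the projection to `E` is then a
retraction of `α`, and a short exact sequence with a retraction splits.
-/

open LinearMap

theorem LinearEquiv.bijective_snd_comp_comp_inr {R A B C : Type*} [Ring R]
    [AddCommGroup A] [Module R A] [AddCommGroup B] [Module R B] [AddCommGroup C] [Module R C]
    (φ : (A × B) ≃ₗ[R] (A × C)) (hφ : ∀ a : A, φ (a, 0) = (a, 0)) :
    Function.Bijective (snd R A C ∘ₗ φ.toLinearMap ∘ₗ inr R A B) := by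
  constructor
  · rw [injective_iff_map_eq_zero]
    intro b hb
    have : φ (0, b) = φ ((φ (0, b)).1, 0) := by
      rw [hφ]
      exact Prod.ext rfl hb
    exact congrArg Prod.snd (φ.injective this)
  · intro c
    obtain ⟨⟨a, b⟩, hab⟩ := φ.surjective (0, c)
    refine ⟨b, ?_⟩
    have : φ (0, b) = φ (a, b) - φ (a, 0) := by
      rw [← map_sub, Prod.mk_sub_mk, sub_self, sub_zero]
    simp [this, hab, hφ]

theorem Function.Exact.exists_comp_eq_id_of_prod_equiv {R M N P K : Type*} [Ring R]
    [AddCommGroup M] [Module R M] [AddCommGroup N] [Module R N] [AddCommGroup P] [Module R P]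
    [AddCommGroup K] [Module R K] {α : M →ₗ[R] N} {π : N →ₗ[R] P}
    (hexact : Function.Exact α π) (hπ : Function.Surjective π)
    (f : (M × K) ≃ₗ[R] N) (hf : ∀ m : M, f (m, 0) = α m) :
    ∃ s : P →ₗ[R] N, π ∘ₗ s = LinearMap.id := by
  have hretract : (fst R M K ∘ₗ f.symm.toLinearMap) ∘ₗ α = LinearMap.id := by
    ext m
    simp [← hf]
  have hsplit := hexact.split_tfae'.out 1 0
  exact (hsplit.mp ⟨hπ, _, hretract⟩).2

theorem stmt16_general (R E N Q : Type*) [CommRing R]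
    [AddCommGroup E] [Module R E]
    [AddCommGroup N] [Module R N]
    [AddCommGroup Q] [Module R Q]
    (α : E →ₗ[R] N) (π : N →ₗ[R] Q)
    (hπ : Function.Surjective π)
    (hexact : Function.Exact α π)
    (φ : (E × E × Q) ≃ₗ[R] (E × N))
    (hsecond : ∀ e : E, φ (0, e, 0) = (e, α e))
    (hfirst : ∀ e : E, φ (e, 0, 0) = (e, 0)) :
    (Function.Bijective (fun x : E × Q => (φ (0, x.1, x.2)).2) ∧
      ∀ e : E, (φ (0, e, 0)).2 = α e) ∧
    ∃ s : Q →ₗ[R] N, π.comp s = LinearMap.id := by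
  have hbij := φ.bijective_snd_comp_comp_inr hfirst
  have hrestrict : ∀ e : E, (φ (0, e, 0)).2 = α e := fun e => by rw [hsecond]
  exact ⟨⟨hbij, hrestrict⟩,
    hexact.exists_comp_eq_id_of_prod_equiv hπ (.ofBijective _ hbij) hrestrict⟩

theorem stmt16 (R E N Q : Type*) [CommRing R]
    [AddCommGroup E] [Module R E] [Module.Finite R E] [Module.Projective R E]
    [AddCommGroup N] [Module R N] [Module.Finite R N] [Module.Projective R N]
    [AddCommGroup Q] [Module R Q] [Module.Finite R Q] [Module.Projective R Q]
    (r : ℕ) (hrankE : Module.finrank R E = r)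
    (α : E →ₗ[R] N) (π : N →ₗ[R] Q)
    (hα : Function.Injective α) (hπ : Function.Surjective π)
    (hexact : Function.Exact α π)
    (φ : (E × E × Q) ≃ₗ[R] (E × N))
    (hsecond : ∀ e : E, φ (0, e, 0) = (e, α e))
    (hfirst : ∀ e : E, φ (e, 0, 0) = (e, 0)) :
    (Function.Bijective (fun x : E × Q => (φ (0, x.1, x.2)).2) ∧
      ∀ e : E, (φ (0, e, 0)).2 = α e) ∧
    ∃ s : Q →ₗ[R] N, π.comp s = LinearMap.id :=
  stmt16_general R E N Q α π hπ hexact φ hsecond hfirst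
end
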